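/- Let Φ:C²→C² be defined by Φ(C)(u,v) = (1/3)C(3u,3v−2) for (u,v) ∈ [0,1/3]×[2/3,1], Φ(C)(u,v) = min(u−1/3, v) for (u,v) ∈ [2/3,1]×[0,2/3], and Φ(C)(u,v) = max(u+v−1,0) otherwise. Then for all 2-copulas C₁, C₂, d_∞(Φ(C₁), Φ(C₂)) = (1/3) d_∞(C₁, C₂); in particular Φ is injective and continuous. -/

import Mathlib

open Set

/-- A 2-copula on [0,1]². -/
def IsCopula2 (C : ℝ → ℝ → ℝ) : Prop :=
  (∀ u ∈ Set.Icc (0:ℝ) 1, ∀ v ∈ Set.Icc (0:ℝ) 1, C u v ∈ Set.Icc (0:ℝ) 1) ∧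
  (∀ u ∈ Set.Icc (0:ℝ) 1, C u 0 = 0 ∧ C 0 u = 0 ∧ C u 1 = u ∧ C 1 u = u) ∧
  (∀ u ∈ Set.Icc (0:ℝ) 1, ∀ u' ∈ Set.Icc (0:ℝ) 1, ∀ v ∈ Set.Icc (0:ℝ) 1, ∀ v' ∈ Set.Icc (0:ℝ) 1,
    u ≤ u' → v ≤ v' → 0 ≤ C u' v' - C u' v - C u v' + C u v)

/-- The W-ordinal sum map Φ placing a 1/3-rescaled copy of C in [0,1/3]×[2/3,1]. -/
noncomputable def Phi (C : ℝ → ℝ → ℝ) (u v : ℝ) : ℝ :=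
  if u ∈ Set.Icc (0:ℝ) (1/3) ∧ v ∈ Set.Icc (2/3 : ℝ) 1 then (1/3) * C (3*u) (3*v - 2)
  else if u ∈ Set.Icc (2/3 : ℝ) 1 ∧ v ∈ Set.Icc (0:ℝ) (2/3) then min (u - 1/3) v
  else max (u + v - 1) 0

/-- The sup distance d_∞ between two functions on [0,1]². -/
noncomputable def dsup (C C' : ℝ → ℝ → ℝ) : ℝ :=
  sSup {x | ∃ u ∈ Set.Icc (0:ℝ) 1, ∃ v ∈ Set.Icc (0:ℝ) 1, x = |C u v - C' u v|}

/-!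
Off the block `[0,1/3] × [2/3,1]` the function `Phi C` does not depend on `C`, and on the block
it is `C` rescaled by `1/3` in both variables and in value. Hence the set of values
`|Phi C₁ - Phi C₂|` is `0` together with `1/3` times the set of values `|C₁ - C₂|`, and the
supremum scales accordingly (for unbounded sets both suprema are the junk value `0`).
-/

open scoped Pointwise

theorem Real.sSup_insert_zero {s : Set ℝ} (hs : ∀ x ∈ s, 0 ≤ x) : sSup (insert 0 s) = sSup s := by
  rcases s.eq_empty_or_nonempty with rfl | hne
  · simp
  by_cases hbdd : BddAbove s
  · rw [csSup_insert hbdd hne, max_eq_right (Real.sSup_nonneg hs)]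
  · rw [Real.sSup_of_not_bddAbove hbdd, Real.sSup_of_not_bddAbove (mt bddAbove_insert.1 hbdd)]

def distSet (C C' : ℝ → ℝ → ℝ) : Set ℝ :=
  {x | ∃ u ∈ Icc (0:ℝ) 1, ∃ v ∈ Icc (0:ℝ) 1, x = |C u v - C' u v|}

theorem dsup_eq_sSup_distSet (C C' : ℝ → ℝ → ℝ) : dsup C C' = sSup (distSet C C') := rfl

theorem nonneg_of_mem_distSet {C C' : ℝ → ℝ → ℝ} {x : ℝ} (hx : x ∈ distSet C C') : 0 ≤ x := by
  obtain ⟨u, -, v, -, rfl⟩ := hx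
  exact abs_nonneg _

theorem Phi_eq_Phi_of_not_mem_block (C₁ C₂ : ℝ → ℝ → ℝ) {u v : ℝ}
    (h : ¬(u ∈ Icc (0:ℝ) (1/3) ∧ v ∈ Icc (2/3 : ℝ) 1)) : Phi C₁ u v = Phi C₂ u v := by
  simp only [Phi, if_neg h]

theorem mem_block_iff {u v : ℝ} : (u ∈ Icc (0:ℝ) (1/3) ∧ v ∈ Icc (2/3 : ℝ) 1) ↔
    ∃ s ∈ Icc (0:ℝ) 1, ∃ t ∈ Icc (0:ℝ) 1, u = s/3 ∧ v = (t+2)/3 := by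
  constructor
  · rintro ⟨⟨hu₀, hu₁⟩, hv₀, hv₁⟩
    exact ⟨3*u, ⟨by linarith, by linarith⟩, 3*v - 2, ⟨by linarith, by linarith⟩, by ring, by ring⟩
  · rintro ⟨s, ⟨hs₀, hs₁⟩, t, ⟨ht₀, ht₁⟩, rfl, rfl⟩
    exact ⟨⟨by linarith, by linarith⟩, by linarith, by linarith⟩

theorem Phi_div_three (C : ℝ → ℝ → ℝ) {s t : ℝ} (hs : s ∈ Icc (0:ℝ) 1) (ht : t ∈ Icc (0:ℝ) 1) :
    Phi C (s/3) ((t+2)/3) = 1/3 * C s t := by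
  rw [Phi, if_pos (mem_block_iff.2 ⟨s, hs, t, ht, rfl, rfl⟩)]
  congr 2 <;> ring

theorem abs_Phi_sub_Phi_div_three (C₁ C₂ : ℝ → ℝ → ℝ) {s t : ℝ} (hs : s ∈ Icc (0:ℝ) 1)
    (ht : t ∈ Icc (0:ℝ) 1) :
    |Phi C₁ (s/3) ((t+2)/3) - Phi C₂ (s/3) ((t+2)/3)| = 1/3 * |C₁ s t - C₂ s t| := by
  rw [Phi_div_three C₁ hs ht, Phi_div_three C₂ hs ht, ← mul_sub, abs_mul,
    abs_of_pos (by norm_num : (0:ℝ) < 1/3)]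

theorem distSet_Phi (C₁ C₂ : ℝ → ℝ → ℝ) :
    distSet (Phi C₁) (Phi C₂) = insert 0 ((1/3 : ℝ) • distSet C₁ C₂) := by
  ext x
  constructor
  · rintro ⟨u, hu, v, hv, rfl⟩
    by_cases hblock : u ∈ Icc (0:ℝ) (1/3) ∧ v ∈ Icc (2/3 : ℝ) 1
    · obtain ⟨s, hs, t, ht, rfl, rfl⟩ := mem_block_iff.1 hblock
      exact Or.inr ⟨_, ⟨s, hs, t, ht, rfl⟩, (abs_Phi_sub_Phi_div_three C₁ C₂ hs ht).symm⟩
    · rw [Phi_eq_Phi_of_not_mem_block C₁ C₂ hblock, sub_self, abs_zero]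
      exact mem_insert _ _
  · rintro (rfl | ⟨_, ⟨s, hs, t, ht, rfl⟩, rfl⟩)
    · refine ⟨1, right_mem_Icc.2 zero_le_one, 0, left_mem_Icc.2 zero_le_one, ?_⟩
      rw [Phi_eq_Phi_of_not_mem_block C₁ C₂ (by norm_num), sub_self, abs_zero]
    · exact ⟨s/3, ⟨by linarith [hs.1], by linarith [hs.2]⟩, (t+2)/3,
        ⟨by linarith [ht.1], by linarith [ht.2]⟩, (abs_Phi_sub_Phi_div_three C₁ C₂ hs ht).symm⟩

theorem Phi_scaling_general (C₁ C₂ : ℝ → ℝ → ℝ) :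
    dsup (Phi C₁) (Phi C₂) = (1/3) * dsup C₁ C₂ ∧
    ((∀ u ∈ Icc (0:ℝ) 1, ∀ v ∈ Icc (0:ℝ) 1, Phi C₁ u v = Phi C₂ u v) →
      ∀ u ∈ Icc (0:ℝ) 1, ∀ v ∈ Icc (0:ℝ) 1, C₁ u v = C₂ u v) := by
  constructor
  · have hnonneg : ∀ x ∈ (1/3 : ℝ) • distSet C₁ C₂, 0 ≤ x := by
      rintro _ ⟨x, hx, rfl⟩
      exact smul_nonneg (by norm_num) (nonneg_of_mem_distSet hx)
    rw [dsup_eq_sSup_distSet, dsup_eq_sSup_distSet, distSet_Phi, Real.sSup_insert_zero hnonneg,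
      Real.sSup_smul_of_nonneg (by norm_num), smul_eq_mul]
  · intro hPhi s hs t ht
    have hblock := hPhi (s/3) ⟨by linarith [hs.1], by linarith [hs.2]⟩
      ((t+2)/3) ⟨by linarith [ht.1], by linarith [ht.2]⟩
    rw [Phi_div_three C₁ hs ht, Phi_div_three C₂ hs ht] at hblock
    linarith

/-- Φ contracts the sup distance exactly by the factor 1/3; in particular it is
injective (and continuous) on the space of 2-copulas. -/
theorem Phi_scaling (C₁ C₂ : ℝ → ℝ → ℝ) (h₁ : IsCopula2 C₁) (h₂ : IsCopula2 C₂) :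
    dsup (Phi C₁) (Phi C₂) = (1/3) * dsup C₁ C₂ ∧
    ((∀ u ∈ Icc (0:ℝ) 1, ∀ v ∈ Icc (0:ℝ) 1, Phi C₁ u v = Phi C₂ u v) →
      ∀ u ∈ Icc (0:ℝ) 1, ∀ v ∈ Icc (0:ℝ) 1, C₁ u v = C₂ u v) :=
  Phi_scaling_general C₁ C₂
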